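/- Inexact PPA one-step recurrence under general Hölderian growth: let F be convex, lower semicontinuous, proper satisfying F(x) - F* ≥ σ · dist_{X*}(x)^γ with γ ≥ 1, let μ > 0 and x⁺ satisfy ‖x⁺ - prox_μF(x)‖ ≤ δ. Then dist_{X*}(x⁺) ≤ max{ dist_{X*}(x) - μ φ(γ) σ dist_{X*}(x)^{γ-1}, (1 - φ(γ)/2) dist_{X*}(x) } + δ, where φ(γ) = min_{λ∈[0,1]} (λ^γ + (1-λ)²). -/

import Mathlib

open Metric Set

noncomputable def phi (γ : ℝ) : ℝ :=
  sInf ((fun l : ℝ => l ^ γ + (1 - l) ^ 2) '' Set.Icc (0 : ℝ) 1)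

lemma phi_le (γ : ℝ) {l : ℝ} (h0 : 0 ≤ l) (h1 : l ≤ 1) :
    phi γ ≤ l ^ γ + (1 - l) ^ 2 := by
  unfold phi
  refine csInf_le ⟨0, ?_⟩ ⟨l, ⟨h0, h1⟩, rfl⟩
  rintro v ⟨m, hm, rfl⟩
  exact add_nonneg (Real.rpow_nonneg hm.1 γ) (sq_nonneg _)

lemma phi_nonneg (γ : ℝ) : 0 ≤ phi γ := by
  unfold phi
  refine le_csInf ⟨1, 1, by norm_num, by norm_num [Real.one_rpow]⟩ ?_
  rintro v ⟨m, hm, rfl⟩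
  exact add_nonneg (Real.rpow_nonneg hm.1 γ) (sq_nonneg _)

lemma phi_le_one (γ : ℝ) : phi γ ≤ 1 := by
  have := phi_le γ (l := 1) zero_le_one le_rfl
  simpa [Real.one_rpow] using this

lemma phi_key (γ : ℝ) (hγ : 1 ≤ γ) : phi γ ≤ (1 - phi γ / 2) ^ (γ - 1) := by
  have h0 := phi_nonneg γ
  have h1 := phi_le_one γ
  have hcpos : (0:ℝ) < 1 - phi γ / 2 := by linarith
  have h2 := phi_le γ (l := 1 - phi γ / 2) (by linarith) (by linarith)
  have h3 : (1 - phi γ / 2) ^ γ = (1 - phi γ / 2) ^ (γ - 1) * (1 - phi γ / 2) := by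
    have h := Real.rpow_add hcpos (γ - 1) 1
    rw [Real.rpow_one] at h
    rw [← h]
    congr 1
    ring
  rw [h3] at h2
  have h4 : phi γ * (1 - phi γ / 2)
      ≤ (1 - phi γ / 2) ^ (γ - 1) * (1 - phi γ / 2) := by
    nlinarith [h2, h0, sq_nonneg (phi γ)]
  exact le_of_mul_le_mul_right h4 hcpos

lemma combo_norm {E : Type*} [NormedAddCommGroup E] [InnerProductSpace ℝ E]
    (t : ℝ) (a b x : E) :
    ‖((1 - t) • a + t • b) - x‖ ^ 2
      = (1 - t) * ‖a - x‖ ^ 2 + t * ‖b - x‖ ^ 2 - t * (1 - t) * ‖a - b‖ ^ 2 := by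
  have hx : (1 - t) • x + t • x = x := by
    rw [← add_smul]; norm_num
  have h : ((1 - t) • a + t • b) - x = (1 - t) • (a - x) + t • (b - x) := by
    conv_lhs => rw [← hx]
    rw [smul_sub, smul_sub]
    abel
  have h2 : a - b = (a - x) - (b - x) := by abel
  rw [h, h2, norm_add_sq_real, norm_sub_sq_real (a - x) (b - x),
    real_inner_smul_left, real_inner_smul_right, norm_smul, norm_smul]
  simp only [Real.norm_eq_abs, mul_pow, sq_abs]
  ring

lemma proxA {E : Type*} [NormedAddCommGroup E] [InnerProductSpace ℝ E]
    {F : E → ℝ} (hconv : ConvexOn ℝ Set.univ F) {μ : ℝ} (hμ : 0 < μ)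
    (x p : E)
    (hp : ∀ z, F p + ‖p - x‖ ^ 2 / (2 * μ) ≤ F z + ‖z - x‖ ^ 2 / (2 * μ))
    (y : E) :
    2 * μ * (F p - F y) ≤ ‖y - x‖ ^ 2 - ‖p - x‖ ^ 2 - ‖p - y‖ ^ 2 := by
  refine le_of_forall_pos_le_add fun ε hε => ?_
  have hq0 : (0:ℝ) ≤ ‖p - y‖ ^ 2 := sq_nonneg _
  set t := min 1 (ε / (‖p - y‖ ^ 2 + 1)) with ht
  have ht0 : 0 < t := lt_min one_pos (by positivity)
  have ht1 : t ≤ 1 := min_le_left _ _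
  have key := hp ((1 - t) • p + t • y)
  rw [combo_norm t p y x] at key
  have hcx := hconv.2 (Set.mem_univ p) (Set.mem_univ y)
    (by linarith : (0:ℝ) ≤ 1 - t) ht0.le (by ring)
  simp only [smul_eq_mul] at hcx
  have hμ2 : (0:ℝ) < 2 * μ := by linarith
  have key2 : F p + ‖p - x‖ ^ 2 / (2 * μ)
      ≤ ((1 - t) * F p + t * F y)
        + ((1 - t) * ‖p - x‖ ^ 2 + t * ‖y - x‖ ^ 2 - t * (1 - t) * ‖p - y‖ ^ 2) / (2 * μ) :=
    key.trans (add_le_add_left hcx _)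
  have key3 := mul_le_mul_of_nonneg_left key2 hμ2.le
  rw [mul_add, mul_add, mul_div_cancel₀ _ hμ2.ne', mul_div_cancel₀ _ hμ2.ne'] at key3
  have h4 : t * (2 * μ * (F p - F y))
      ≤ t * ((‖y - x‖ ^ 2 - ‖p - x‖ ^ 2 - ‖p - y‖ ^ 2) + t * ‖p - y‖ ^ 2) := by
    nlinarith [key3]
  have h5 := le_of_mul_le_mul_left h4 ht0
  have htq : t * ‖p - y‖ ^ 2 ≤ ε := by
    have h6 : t ≤ ε / (‖p - y‖ ^ 2 + 1) := min_le_right _ _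
    have h7 : t * ‖p - y‖ ^ 2 ≤ (ε / (‖p - y‖ ^ 2 + 1)) * ‖p - y‖ ^ 2 :=
      mul_le_mul_of_nonneg_right h6 hq0
    have h8 : (ε / (‖p - y‖ ^ 2 + 1)) * ‖p - y‖ ^ 2 ≤ ε := by
      rw [div_mul_eq_mul_div, div_le_iff₀ (by positivity)]
      nlinarith
    linarith
  linarith

theorem stmt_11 {n : ℕ} (F : EuclideanSpace ℝ (Fin n) → ℝ)
    (hconv : ConvexOn ℝ Set.univ F) (hlsc : LowerSemicontinuous F)
    (Xs : Set (EuclideanSpace ℝ (Fin n))) (hXs : Xs = {y | ∀ z, F y ≤ F z})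
    (hne : Xs.Nonempty) (Fstar : ℝ) (hFstar : ∀ y ∈ Xs, F y = Fstar)
    (γ σ : ℝ) (hγ : 1 ≤ γ) (hσ : 0 < σ)
    (hgrowth : ∀ x, σ * infDist x Xs ^ γ ≤ F x - Fstar)
    (μ δ : ℝ) (hμ : 0 < μ) (hδ : 0 ≤ δ)
    (x p xp : EuclideanSpace ℝ (Fin n))
    (hp : ∀ z, F p + ‖p - x‖ ^ 2 / (2 * μ) ≤ F z + ‖z - x‖ ^ 2 / (2 * μ))
    (hxp : ‖xp - p‖ ≤ δ) :
    infDist xp Xs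
      ≤ max (infDist x Xs - μ * phi γ * σ * infDist x Xs ^ (γ - 1))
            ((1 - phi γ / 2) * infDist x Xs) + δ := by
  have hφ0 := phi_nonneg γ
  have hφ1 := phi_le_one γ
  have hkey := phi_key γ hγ
  -- Xs is closed; pick the projection of x
  have hXsc : IsClosed Xs := by
    have hrw : Xs = ⋂ z, F ⁻¹' Set.Iic (F z) := by
      rw [hXs]; ext y; simp [Set.mem_iInter]
    rw [hrw]
    exact isClosed_iInter fun z => hlsc.isClosed_preimage (F z)
  obtain ⟨xb, hxb, hdx⟩ := hXsc.exists_infDist_eq_dist hne x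
  set d := infDist x Xs with hd
  set D := infDist p Xs with hD
  have hd0 : 0 ≤ d := infDist_nonneg
  have hD0 : 0 ≤ D := infDist_nonneg
  have hA := proxA hconv hμ x p hp xb
  have hFxb : F xb = Fstar := hFstar xb hxb
  have hxbx : ‖xb - x‖ = d := by rw [hdx, dist_eq_norm, norm_sub_rev]
  rw [hFxb, hxbx] at hA
  have hgr2 : 2 * μ * (σ * D ^ γ) ≤ 2 * μ * (F p - Fstar) :=
    mul_le_mul_of_nonneg_left (hgrowth p) (by linarith)
  have hmain : ‖p - xb‖ ^ 2 + 2 * μ * (σ * D ^ γ) ≤ d ^ 2 - ‖p - x‖ ^ 2 := by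
    linarith [hA, hgr2]
  have hDq : D ≤ ‖p - xb‖ := by
    rw [hD, ← dist_eq_norm]; exact infDist_le_dist_of_mem hxb
  have hdip : d ≤ D + ‖p - x‖ := by
    have h := infDist_le_infDist_add_dist (x := x) (y := p) (s := Xs)
    rwa [dist_eq_norm, norm_sub_rev] at h
  have hprod : (0:ℝ) ≤ 2 * μ * (σ * D ^ γ) := by
    have := Real.rpow_nonneg hD0 γ
    positivity
  have hq2 : D ^ 2 ≤ ‖p - xb‖ ^ 2 := pow_le_pow_left₀ hD0 hDq 2
  have hD2d2 : D ^ 2 ≤ d ^ 2 := by nlinarith [hmain, hq2, sq_nonneg ‖p - x‖, hprod]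
  have hDd : D ≤ d := by nlinarith [hD2d2, hD0, hd0]
  have hesq : (d - D) ^ 2 ≤ ‖p - x‖ ^ 2 :=
    pow_le_pow_left₀ (by linarith) (by linarith) 2
  have hI : 2 * D ^ 2 + 2 * μ * (σ * D ^ γ) ≤ 2 * d * D := by
    nlinarith [hmain, hq2, hesq]
  have htri : infDist xp Xs ≤ D + δ := by
    have h1 := infDist_le_infDist_add_dist (x := xp) (y := p) (s := Xs)
    rw [dist_eq_norm] at h1
    linarith
  by_cases hcase : D ≤ (1 - phi γ / 2) * d
  · have h : infDist xp Xs ≤ (1 - phi γ / 2) * d + δ := by linarith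
    exact h.trans (add_le_add_left (le_max_right _ _) δ)
  · push_neg at hcase
    have hdpos : 0 < d := by
      by_contra h
      push_neg at h
      have hd00 : d = 0 := le_antisymm h hd0
      rw [hd00, mul_zero] at hcase
      rw [hd00] at hDd
      linarith
    have hDpos : 0 < D := lt_trans (mul_pos (by linarith) hdpos) hcase
    have hsplit : D ^ γ = D ^ (γ - 1) * D := by
      have h := Real.rpow_add hDpos (γ - 1) 1
      rw [Real.rpow_one] at h
      rw [← h]
      congr 1
      ring
    rw [hsplit] at hI
    have h4 : (D + μ * σ * D ^ (γ - 1)) * D ≤ d * D := by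
      have e1 : (D + μ * σ * D ^ (γ - 1)) * D = D ^ 2 + μ * σ * D ^ (γ - 1) * D := by
        ring
      rw [e1]
      linarith [hI]
    have hdiv : D + μ * σ * D ^ (γ - 1) ≤ d := le_of_mul_le_mul_right h4 hDpos
    have h1 : ((1 - phi γ / 2) * d) ^ (γ - 1) ≤ D ^ (γ - 1) :=
      Real.rpow_le_rpow (mul_nonneg (by linarith) hd0) hcase.le (by linarith)
    have h2 : ((1 - phi γ / 2) * d) ^ (γ - 1)
        = (1 - phi γ / 2) ^ (γ - 1) * d ^ (γ - 1) :=
      Real.mul_rpow (by linarith) hd0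
    have h3 : phi γ * d ^ (γ - 1) ≤ (1 - phi γ / 2) ^ (γ - 1) * d ^ (γ - 1) :=
      mul_le_mul_of_nonneg_right hkey (Real.rpow_nonneg hd0 _)
    have h6 : μ * σ * (phi γ * d ^ (γ - 1)) ≤ μ * σ * D ^ (γ - 1) := by
      have h7 : phi γ * d ^ (γ - 1) ≤ D ^ (γ - 1) := by
        rw [h2] at h1
        linarith
      exact mul_le_mul_of_nonneg_left h7 (by positivity)
    have hfin : D ≤ d - μ * phi γ * σ * d ^ (γ - 1) := by linarith [hdiv, h6]
    have h8 : infDist xp Xs ≤ (d - μ * phi γ * σ * d ^ (γ - 1)) + δ := by linarith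
    exact h8.trans (add_le_add_left (le_max_left _ _) δ)
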